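/- arXiv:2111.14522 — 4 statements merged into one kernel-verified Lean document; each statement's English description precedes it below -/
import Mathlib

section
/- Let G = (V,E) be a simple, undirected, locally finite graph and consider an MPNN with scalar features computing h_i^{(ℓ+1)} = φ_ℓ(h_i^{(ℓ)}, Σ_j â_{ij} ψ_ℓ(h_i^{(ℓ)}, h_j^{(ℓ)})) with H^{(0)} = X, where all φ_ℓ and ψ_ℓ are differentiable with gradient norms bounded by α and β respectively. If i, s ∈ V satisfy d_G(i,s) = r+1, then |∂h_i^{(r+1)}/∂x_s| ≤ (αβ)^{r+1} (Â^{r+1})_{is}. -/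
/-!
Induction on the layer `ℓ`, for all nodes `v` with `ℓ ≤ d_G(v, s)` at once. Since
`(Â^ℓ)_{vs} = 0` when `ℓ < d_G(v, s)`, the induction hypothesis says that `h_v^{(ℓ)}` has zero
derivative in `x_s`, so the chain rule through `φ_ℓ` only sees the aggregated messages. Each
message contributes at most `β â_{vu}` times the derivative of `h_u^{(ℓ)}`, where `u` is `v` or
a neighbour of `v` and hence still satisfies `ℓ ≤ d_G(u, s)`; summing over `u` is one more
multiplication by `Â`.
-/

/-- The normalized augmented adjacency matrix `Â = D̃^{-1/2}(A+I)D̃^{-1/2}`,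
where `A` is the adjacency matrix of `G` and `D̃` is the diagonal degree matrix of `A + I`. -/
noncomputable def hatA {V : Type*} [Fintype V] [DecidableEq V]
    (G : SimpleGraph V) [DecidableRel G.Adj] : Matrix V V ℝ := fun i j =>
  (if i = j then 1 else if G.Adj i j then 1 else 0) /
    (Real.sqrt ((G.degree i : ℝ) + 1) * Real.sqrt ((G.degree j : ℝ) + 1))

open Finset

theorem SimpleGraph.dist_le_dist_add_one_of_eq_or_adj {V : Type*} (G : SimpleGraph V)
    {v u : V} (hvu : v = u ∨ G.Adj v u) (s : V) : G.dist v s ≤ G.dist u s + 1 := by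
  rcases hvu with rfl | hadj
  · omega
  · have := hadj.reachable.dist_triangle_left s
    rw [G.dist_eq_one_iff_adj.mpr hadj] at this
    omega

theorem Matrix.pow_apply_eq_zero_of_lt_dist {V R : Type*} [Fintype V] [DecidableEq V]
    [Semiring R] (G : SimpleGraph V) {M : Matrix V V R}
    (hM : ∀ v u, ¬(v = u ∨ G.Adj v u) → M v u = 0) {s : V} :
    ∀ {ℓ : ℕ} {v : V}, ℓ < G.dist v s → (M ^ ℓ) v s = 0
  | 0, v, h => Matrix.one_apply_ne fun hvs => by simp [hvs] at h
  | ℓ + 1, v, h => by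
    rw [pow_succ', Matrix.mul_apply]
    refine sum_eq_zero fun u _ => ?_
    by_cases hvu : v = u ∨ G.Adj v u
    · have := G.dist_le_dist_add_one_of_eq_or_adj hvu s
      rw [pow_apply_eq_zero_of_lt_dist G hM (by omega), mul_zero]
    · rw [hM v u hvu, zero_mul]

theorem ContinuousLinearMap.norm_apply_zero_prod_le {𝕜 E F G : Type*}
    [NontriviallyNormedField 𝕜] [SeminormedAddCommGroup E] [NormedSpace 𝕜 E]
    [SeminormedAddCommGroup F] [NormedSpace 𝕜 F] [SeminormedAddCommGroup G] [NormedSpace 𝕜 G]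
    {L : E × F →L[𝕜] G} {c : ℝ} (hL : ‖L‖ ≤ c) (y : F) : ‖L (0, y)‖ ≤ c * ‖y‖ :=
  (L.le_opNorm _).trans (mul_le_mul hL (by simp [Prod.norm_def]) (norm_nonneg _)
    ((norm_nonneg _).trans hL))

section
variable {V : Type*} [Fintype V] [DecidableEq V] (G : SimpleGraph V) [DecidableRel G.Adj]

theorem hatA_nonneg (i j : V) : 0 ≤ hatA G i j := by
  unfold hatA
  split_ifs <;> positivity

theorem hatA_eq_zero_of_not_eq_or_adj (i j : V) (hij : ¬(i = j ∨ G.Adj i j)) : hatA G i j = 0 := by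
  obtain ⟨hne, hnadj⟩ := not_or.mp hij
  simp [hatA, hne, hnadj]

end

section
variable {V E : Type*} [Fintype V] [NormedAddCommGroup E] [NormedSpace ℝ E]

def mpnnLayer (A : Matrix V V ℝ) (φ ψ : ℝ × ℝ → ℝ) (H : V → ℝ) (v : V) : ℝ :=
  φ (H v, ∑ u, A v u * ψ (H v, H u))

theorem hasFDerivAt_mpnnLayer {A : Matrix V V ℝ} {φ ψ : ℝ × ℝ → ℝ}
    (hφ : Differentiable ℝ φ) (hψ : Differentiable ℝ ψ) {H : E → V → ℝ} {D : V → E →L[ℝ] ℝ}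
    {X : E} (hH : ∀ u, HasFDerivAt (fun Y => H Y u) (D u) X) (v : V) :
    HasFDerivAt (fun Y => mpnnLayer A φ ψ (H Y) v)
      ((fderiv ℝ φ (H X v, ∑ u, A v u * ψ (H X v, H X u))).comp ((D v).prod
        (∑ u, A v u • (fderiv ℝ ψ (H X v, H X u)).comp ((D v).prod (D u))))) X := by
  have hmsg : ∀ u, HasFDerivAt (fun Y => ψ (H Y v, H Y u))
      ((fderiv ℝ ψ (H X v, H X u)).comp ((D v).prod (D u))) X :=
    fun u => (hψ _).hasFDerivAt.comp X ((hH v).prodMk (hH u))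
  exact (hφ _).hasFDerivAt.comp X
    ((hH v).prodMk (HasFDerivAt.fun_sum fun u _ => (hmsg u).const_mul (A v u)))

theorem abs_fderiv_mpnnLayer_le {A : Matrix V V ℝ} {φ ψ : ℝ × ℝ → ℝ} {α β : ℝ}
    (hφ : Differentiable ℝ φ) (hφ' : ∀ p, ‖fderiv ℝ φ p‖ ≤ α)
    (hψ : Differentiable ℝ ψ) (hψ' : ∀ p, ‖fderiv ℝ ψ p‖ ≤ β)
    {H : E → V → ℝ} {X : E} (hH : ∀ u, DifferentiableAt ℝ (fun Y => H Y u) X) {v : V} {w : E}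
    (hv : fderiv ℝ (fun Y => H Y v) X w = 0) :
    |fderiv ℝ (fun Y => mpnnLayer A φ ψ (H Y) v) X w| ≤
      α * ∑ u, |A v u| * (β * |fderiv ℝ (fun Y => H Y u) X w|) := by
  rw [(hasFDerivAt_mpnnLayer hφ hψ (fun u => (hH u).hasFDerivAt) v).fderiv]
  simp only [ContinuousLinearMap.comp_apply, ContinuousLinearMap.prod_apply,
    FunLike.coe_sum, Finset.sum_apply, FunLike.coe_smul, Pi.smul_apply, smul_eq_mul, hv]
  have hlin : ∀ {L : ℝ × ℝ →L[ℝ] ℝ} {c : ℝ}, ‖L‖ ≤ c → ∀ t, |L (0, t)| ≤ c * |t| :=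
    fun hL t => by
      simpa only [Real.norm_eq_abs] using ContinuousLinearMap.norm_apply_zero_prod_le hL t
  refine (hlin (hφ' _) _).trans (mul_le_mul_of_nonneg_left ?_ ((norm_nonneg _).trans (hφ' 0)))
  refine (abs_sum_le_sum_abs _ _).trans (sum_le_sum fun u _ => ?_)
  rw [abs_mul]
  exact mul_le_mul_of_nonneg_left (hlin (hψ' _) _) (abs_nonneg _)

end

section
variable {V E : Type*} [Fintype V] {A : Matrix V V ℝ} {φ ψ : ℕ → ℝ × ℝ → ℝ}

theorem differentiable_mpnn_apply [NormedAddCommGroup E] [NormedSpace ℝ E] {h : ℕ → E → V → ℝ}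
    (hφ : ∀ ℓ, Differentiable ℝ (φ ℓ)) (hψ : ∀ ℓ, Differentiable ℝ (ψ ℓ))
    (h0 : ∀ v, Differentiable ℝ (fun Y => h 0 Y v))
    (hrec : ∀ ℓ Y, h (ℓ + 1) Y = mpnnLayer A (φ ℓ) (ψ ℓ) (h ℓ Y)) (ℓ : ℕ) (v : V) :
    Differentiable ℝ (fun Y => h ℓ Y v) := by
  induction ℓ generalizing v with
  | zero => exact h0 v
  | succ ℓ ih =>
    intro X
    simp only [hrec]
    exact (hasFDerivAt_mpnnLayer (hφ ℓ) (hψ ℓ) (fun u => (ih u X).hasFDerivAt) v).differentiableAt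

theorem abs_fderiv_mpnn_apply_le [DecidableEq V] (G : SimpleGraph V) (hA : ∀ v u, 0 ≤ A v u)
    (hAG : ∀ v u, ¬(v = u ∨ G.Adj v u) → A v u = 0) {α β : ℝ}
    (hφ : ∀ ℓ, Differentiable ℝ (φ ℓ)) (hφ' : ∀ ℓ p, ‖fderiv ℝ (φ ℓ) p‖ ≤ α)
    (hψ : ∀ ℓ, Differentiable ℝ (ψ ℓ)) (hψ' : ∀ ℓ p, ‖fderiv ℝ (ψ ℓ) p‖ ≤ β)
    {h : ℕ → (V → ℝ) → V → ℝ} (h0 : ∀ X, h 0 X = X)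
    (hrec : ∀ ℓ X, h (ℓ + 1) X = mpnnLayer A (φ ℓ) (ψ ℓ) (h ℓ X)) (s : V) (ℓ : ℕ) (v : V)
    (X : V → ℝ) (hv : ℓ ≤ G.dist v s) :
    |fderiv ℝ (fun Y => h ℓ Y v) X (Pi.single s 1)| ≤ (α * β) ^ ℓ * (A ^ ℓ) v s := by
  induction ℓ generalizing v with
  | zero =>
    simp only [h0, (hasFDerivAt_apply v X).fderiv, ContinuousLinearMap.proj_apply, pow_zero,
      one_mul, Matrix.one_apply, Pi.single_apply]
    split_ifs <;> simp
  | succ ℓ ih =>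
    have hdiff := differentiable_mpnn_apply hφ hψ (by simpa [h0] using differentiable_apply) hrec ℓ
    have hself : fderiv ℝ (fun Y => h ℓ Y v) X (Pi.single s 1) = 0 := by
      have := ih v (by omega)
      rwa [Matrix.pow_apply_eq_zero_of_lt_dist G hAG (by omega), mul_zero, abs_nonpos_iff] at this
    have hα : 0 ≤ α := (norm_nonneg _).trans (hφ' 0 0)
    have hβ : 0 ≤ β := (norm_nonneg _).trans (hψ' 0 0)
    simp only [hrec]
    calc _ ≤ α * ∑ u, |A v u| * (β * |fderiv ℝ (fun Y => h ℓ Y u) X (Pi.single s 1)|) :=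
          abs_fderiv_mpnnLayer_le (hφ ℓ) (hφ' ℓ) (hψ ℓ) (hψ' ℓ) (fun u => hdiff u X) hself
      _ ≤ α * ∑ u, A v u * (β * ((α * β) ^ ℓ * (A ^ ℓ) u s)) := by
          refine mul_le_mul_of_nonneg_left (sum_le_sum fun u _ => ?_) hα
          by_cases hvu : v = u ∨ G.Adj v u
          · have := G.dist_le_dist_add_one_of_eq_or_adj hvu s
            rw [abs_of_nonneg (hA v u)]
            exact mul_le_mul_of_nonneg_left
              (mul_le_mul_of_nonneg_left (ih u (by omega)) hβ) (hA v u)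
          · simp [hAG v u hvu]
      _ = (α * β) ^ (ℓ + 1) * (A ^ (ℓ + 1)) v s := by
          rw [pow_succ' A, Matrix.mul_apply, mul_sum, mul_sum]
          exact sum_congr rfl fun u _ => by ring

end

/-- **Over-squashing Jacobian bound for MPNNs.**
Consider an MPNN with scalar features
`h_i^{(ℓ+1)} = φ_ℓ(h_i^{(ℓ)}, Σ_j â_{ij} ψ_ℓ(h_i^{(ℓ)}, h_j^{(ℓ)}))`, `H^{(0)} = X`,
where the differentiable maps `φ_ℓ, ψ_ℓ` have gradient norms bounded by `α` and `β`.
If `d_G(i,s) = r + 1`, then `|∂ h_i^{(r+1)} / ∂ x_s| ≤ (αβ)^{r+1} (Â^{r+1})_{is}`. -/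
theorem mpnn_jacobian_bound {V : Type*} [Fintype V] [DecidableEq V]
    (G : SimpleGraph V) [DecidableRel G.Adj]
    (α β : ℝ) (φ ψ : ℕ → ℝ × ℝ → ℝ)
    (hφdiff : ∀ ℓ, Differentiable ℝ (φ ℓ))
    (hφgrad : ∀ ℓ p, ‖fderiv ℝ (φ ℓ) p‖ ≤ α)
    (hψdiff : ∀ ℓ, Differentiable ℝ (ψ ℓ))
    (hψgrad : ∀ ℓ p, ‖fderiv ℝ (ψ ℓ) p‖ ≤ β)
    (h : ℕ → (V → ℝ) → V → ℝ)
    (h0 : ∀ X v, h 0 X v = X v)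
    (hrec : ∀ ℓ X v, h (ℓ + 1) X v =
      φ ℓ (h ℓ X v, ∑ u, hatA G v u * ψ ℓ (h ℓ X v, h ℓ X u)))
    (r : ℕ) (i s : V) (hdist : G.dist i s = r + 1) (X : V → ℝ) :
    |fderiv ℝ (fun Y => h (r + 1) Y i) X (Pi.single s 1)| ≤
      (α * β) ^ (r + 1) * (hatA G ^ (r + 1)) i s :=
  abs_fderiv_mpnn_apply_le G (hatA_nonneg G) (hatA_eq_zero_of_not_eq_or_adj G)
    hφdiff hφgrad hψdiff hψgrad (fun X => funext (h0 X)) (fun ℓ X => funext (hrec ℓ X)) s (r + 1) i X hdist.ge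
end

section
/- Let i∼j be an edge with d_i ≤ d_j and let 0 < δ < 1 satisfy δ²·d_j ≤ 1. If Ric(i,j) ≤ −2 + δ, then δ·|♯Δ(i,j)| ≤ 1. -/
open Finset

variable {V : Type*} [Fintype V] [DecidableEq V]

/-- `S_1(i)`, the set of neighbors of `i`. -/
def nbr (G : SimpleGraph V) [DecidableRel G.Adj] (i : V) : Finset V :=
  G.neighborFinset i

/-- `♯Δ(i,j) = S_1(i) ∩ S_1(j)`, the triangles based at the edge `i∼j`. -/
def sharpTri (G : SimpleGraph V) [DecidableRel G.Adj] (i j : V) : Finset V :=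
  nbr G i ∩ nbr G j

/-- `♯□^i(i,j)`, the neighbors `k` of `i` (with `k ∉ S_1(j)`, `k ≠ j`) forming a 4-cycle
based at `i∼j` without diagonals inside: `∃ w ∈ (S_1(k) ∩ S_1(j)) \ S_1(i)`. -/
def sharpSq (G : SimpleGraph V) [DecidableRel G.Adj] (i j : V) : Finset V :=
  ((nbr G i \ nbr G j).erase j).filter fun k =>
    ((nbr G k ∩ nbr G j) \ nbr G i).Nonempty

/-- `γ_max(i,j)`: the maximal degeneracy of edges forming 4-cycles based at `i∼j`.
Here `(A_k · (A_j − A_i ⊙ A_j)) = |S_1(k) ∩ (S_1(j) \ S_1(i))|`. -/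
def gammaMax (G : SimpleGraph V) [DecidableRel G.Adj] (i j : V) : ℕ :=
  max ((sharpSq G i j).sup fun k => (nbr G k ∩ (nbr G j \ nbr G i)).card - 1)
      ((sharpSq G j i).sup fun w => (nbr G w ∩ (nbr G i \ nbr G j)).card - 1)

/-- The balanced Forman curvature `Ric(i,j)`. -/
noncomputable def Ric (G : SimpleGraph V) [DecidableRel G.Adj] (i j : V) : ℝ :=
  if min (G.degree i) (G.degree j) = 1 then 0
  else
    2 / (G.degree i : ℝ) + 2 / (G.degree j : ℝ) - 2
      + 2 * ((sharpTri G i j).card : ℝ) / ((max (G.degree i) (G.degree j) : ℕ) : ℝ)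
      + ((sharpTri G i j).card : ℝ) / ((min (G.degree i) (G.degree j) : ℕ) : ℝ)
      + if (sharpSq G i j).card = 0 then 0
        else ((gammaMax G i j : ℝ))⁻¹ / ((max (G.degree i) (G.degree j) : ℕ) : ℝ)
          * (((sharpSq G i j).card : ℝ) + ((sharpSq G j i).card : ℝ))

/-- **Few triangles on strongly negatively curved edges.**
For an edge `i∼j` with `d_i ≤ d_j` and `0 < δ < 1` with `δ² d_j ≤ 1`,
if `Ric(i,j) ≤ −2 + δ` then `δ |♯Δ(i,j)| ≤ 1`. -/
theorem negatively_curved_few_triangles (G : SimpleGraph V) [DecidableRel G.Adj] (i j : V)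
    (hij : G.Adj i j) (hdeg : G.degree i ≤ G.degree j) (δ : ℝ) (hδ0 : 0 < δ) (hδ1 : δ < 1)
    (hδd : δ ^ 2 * (G.degree j : ℝ) ≤ 1)
    (hric : Ric G i j ≤ -2 + δ) :
    δ * ((sharpTri G i j).card : ℝ) ≤ 1 := by
  have hdi1 : 1 ≤ G.degree i := Finset.card_pos.2 ⟨j, (G.mem_neighborFinset i j).2 hij⟩
  have hmin : min (G.degree i) (G.degree j) = G.degree i := min_eq_left hdeg
  have hmax : max (G.degree i) (G.degree j) = G.degree j := max_eq_right hdeg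
  unfold Ric at hric
  by_cases h1 : min (G.degree i) (G.degree j) = 1
  · rw [if_pos h1] at hric; linarith
  · rw [if_neg h1, hmin, hmax] at hric
    have hdi : (0:ℝ) < (G.degree i : ℝ) := by exact_mod_cast hdi1
    have hdj : (0:ℝ) < (G.degree j : ℝ) := lt_of_lt_of_le hdi (by exact_mod_cast hdeg)
    set T : ℝ := ((sharpTri G i j).card : ℝ) with hT
    have hT0 : 0 ≤ T := by positivity
    have hQ : (0:ℝ) ≤ (if (sharpSq G i j).card = 0 then 0
        else ((gammaMax G i j : ℝ))⁻¹ / ((G.degree j : ℕ) : ℝ)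
          * (((sharpSq G i j).card : ℝ) + ((sharpSq G j i).card : ℝ))) := by
      split <;> positivity
    have h2 : 2 / (G.degree i : ℝ) ≥ 0 := by positivity
    have h3 : 2 / (G.degree j : ℝ) ≥ 0 := by positivity
    have h4 : 2 * T / (G.degree j : ℝ) ≥ 0 := by positivity
    have h5 : T / (G.degree i : ℝ) ≤ δ := by
      push_cast at hric ⊢
      linarith
    have h6 : T ≤ δ * (G.degree i : ℝ) := by
      rw [div_le_iff₀ hdi] at h5; linarith
    have hij' : (G.degree i : ℝ) ≤ (G.degree j : ℝ) := by exact_mod_cast hdeg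
    have h7 : T ≤ δ * (G.degree j : ℝ) :=
      h6.trans (mul_le_mul_of_nonneg_left hij' hδ0.le)
    calc δ * T ≤ δ * (δ * (G.degree j : ℝ)) := mul_le_mul_of_nonneg_left h7 hδ0.le
    _ = δ ^ 2 * (G.degree j : ℝ) := by ring
    _ ≤ 1 := hδd
end

section
/- Let i∼j be an edge with d_i ≤ d_j and let Ω_j = (S_1(i) ∩ S_1(j)) ∪ {j}. If Ric(i,j) ≤ −2 + δ for some 0 < δ < (1 + γ_max(i,j))^{-1}, then the average betweenness centrality over Ω_j satisfies (1/|Ω_j|) Σ_{k∈Ω_j} b(k) ≥ δ^{-1}. -/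
open Finset

variable {V : Type*} [Fintype V] [DecidableEq V]

/-- `σ_{st}`: the number of shortest paths (geodesics) from `s` to `t`. -/
noncomputable def nGeo (G : SimpleGraph V) (s t : V) : ℕ :=
  Nat.card {p : G.Walk s t // p.length = G.dist s t}

/-- `σ_{st}(k)`: the number of shortest paths from `s` to `t` passing through `k`. -/
noncomputable def nGeoThrough (G : SimpleGraph V) (s t k : V) : ℕ :=
  Nat.card {p : G.Walk s t // p.length = G.dist s t ∧ k ∈ p.support}

/-- The betweenness centrality `b(k) = Σ_{s,t ≠ k} σ_{st}(k)/σ_{st}`. -/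
noncomputable def btw (G : SimpleGraph V) (k : V) : ℝ :=
  ∑ s, ∑ t, if s ≠ k ∧ t ≠ k then (nGeoThrough G s t k : ℝ) / (nGeo G s t : ℝ) else 0


set_option linter.unusedSectionVars false
open SimpleGraph

lemma walk_len_two {G : SimpleGraph V} {i t : V} (p : G.Walk i t) (hp : p.length = 2) :
    ∃ (m : V) (h1 : G.Adj i m) (h2 : G.Adj m t),
      p = Walk.cons h1 (Walk.cons h2 Walk.nil) := by
  cases p with
  | nil => simp at hp
  | cons h q =>
    cases q with
    | nil => simp at hp
    | cons h' r =>
      cases r with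
      | nil => exact ⟨_, h, h', rfl⟩
      | cons h'' s => simp [Walk.length_cons] at hp

lemma dist_two {G : SimpleGraph V} {i j t : V} (hij : G.Adj i j) (hjt : G.Adj j t)
    (hit : ¬ G.Adj i t) (hne : i ≠ t) : G.dist i t = 2 := by
  have h2 : G.dist i t ≤ 2 := by
    have := SimpleGraph.dist_le (Walk.cons hij (Walk.cons hjt Walk.nil))
    simpa using this
  have h0 : G.dist i t ≠ 0 := by
    have hr : G.Reachable i t := (Walk.cons hij (Walk.cons hjt Walk.nil)).reachable
    exact (hr.pos_dist_of_ne hne).ne'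
  have h1 : G.dist i t ≠ 1 := fun h => hit (SimpleGraph.dist_eq_one_iff_adj.mp h)
  omega

lemma mem_nbr {G : SimpleGraph V} [DecidableRel G.Adj] {a b : V} :
    a ∈ nbr G b ↔ G.Adj b a := by simp [nbr]

lemma nGeo_eq {G : SimpleGraph V} [DecidableRel G.Adj] {i t : V} (hd : G.dist i t = 2) :
    nGeo G i t = (nbr G i ∩ nbr G t).card := by
  rw [nGeo, hd]
  have hb : Function.Bijective (fun m : ↥(nbr G i ∩ nbr G t) =>
      (⟨Walk.cons (mem_nbr.mp (Finset.mem_inter.mp m.2).1)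
        (Walk.cons (mem_nbr.mp (Finset.mem_inter.mp m.2).2).symm Walk.nil), by simp⟩ :
        {p : G.Walk i t // p.length = 2})) := by
    constructor
    · rintro ⟨m, hm⟩ ⟨m', hm'⟩ h
      simp only [Subtype.mk.injEq] at h
      have := congrArg Walk.support h
      simp only [Walk.support_cons, Walk.support_nil] at this
      exact Subtype.ext (by simpa using this)
    · rintro ⟨p, hp⟩
      obtain ⟨m, h1, h2, rfl⟩ := walk_len_two p hp
      exact ⟨⟨m, Finset.mem_inter.mpr ⟨mem_nbr.mpr h1, mem_nbr.mpr h2.symm⟩⟩, rfl⟩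
  rw [← Nat.card_eq_of_bijective _ hb, Nat.card_eq_finsetCard]

lemma nGeoThrough_pos {G : SimpleGraph V} [DecidableRel G.Adj] {i t k : V} (hd : G.dist i t = 2)
    (hk : k ∈ nbr G i ∩ nbr G t) : 1 ≤ nGeoThrough G i t k := by
  rw [nGeoThrough]
  haveI : Finite {p : G.Walk i t // p.length = G.dist i t ∧ k ∈ p.support} :=
    Finite.of_injective (fun x => (⟨x.1, x.2.1⟩ : {p : G.Walk i t // p.length = G.dist i t}))
      (by rintro ⟨a, _⟩ ⟨b, _⟩ h; simpa [Subtype.ext_iff] using h)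
  haveI : Nonempty {p : G.Walk i t // p.length = G.dist i t ∧ k ∈ p.support} := by
    refine ⟨⟨Walk.cons (mem_nbr.mp (Finset.mem_inter.mp hk).1)
      (Walk.cons (mem_nbr.mp (Finset.mem_inter.mp hk).2).symm Walk.nil), ?_⟩⟩
    simp [hd]
  exact Nat.card_pos

lemma sharpSq_eq {G : SimpleGraph V} [DecidableRel G.Adj] {a b : V} (hab : G.Adj a b) :
    sharpSq G a b = (nbr G a \ nbr G b).erase b := by
  rw [sharpSq, Finset.filter_true_of_mem]
  intro k hk
  rw [Finset.mem_erase, Finset.mem_sdiff] at hk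
  refine ⟨a, ?_⟩
  rw [Finset.mem_sdiff, Finset.mem_inter]
  exact ⟨⟨mem_nbr.mpr (mem_nbr.mp hk.2.1).symm, mem_nbr.mpr hab.symm⟩,
    by simp [mem_nbr]⟩

lemma card_sq {G : SimpleGraph V} [DecidableRel G.Adj] {a b : V} (hab : G.Adj a b) :
    (sharpSq G a b).card + 1 + (nbr G a ∩ nbr G b).card = G.degree a := by
  rw [sharpSq_eq hab]
  have hb : b ∈ nbr G a \ nbr G b := by
    rw [Finset.mem_sdiff]
    exact ⟨mem_nbr.mpr hab, by simp [mem_nbr]⟩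
  have h1 := Finset.card_erase_add_one hb
  have h2 := Finset.card_sdiff_add_card_inter (nbr G a) (nbr G b)
  have h3 : (nbr G a).card = G.degree a := rfl
  omega

set_option maxHeartbeats 1000000

/-- **Negative curvature forces high betweenness centrality.**
For an edge `i∼j` with `d_i ≤ d_j` and `Ω_j = (S_1(i) ∩ S_1(j)) ∪ {j}`,
if `Ric(i,j) ≤ −2 + δ` for some `0 < δ < (1 + γ_max)⁻¹`, then
`(1/|Ω_j|) Σ_{k∈Ω_j} b(k) ≥ δ⁻¹`. -/
theorem negatively_curved_high_betweenness (G : SimpleGraph V) [DecidableRel G.Adj]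
    (i j : V) (hij : G.Adj i j) (hdeg : G.degree i ≤ G.degree j)
    (δ : ℝ) (hδ0 : 0 < δ) (hδ1 : δ < (1 + (gammaMax G i j : ℝ))⁻¹)
    (hric : Ric G i j ≤ -2 + δ) :
    δ⁻¹ ≤ (1 / (((nbr G i ∩ nbr G j) ∪ {j}).card : ℝ)) *
      ∑ k ∈ (nbr G i ∩ nbr G j) ∪ {j}, btw G k := by
  have hδlt1 : δ < 1 := by
    have h1 : (1:ℝ) ≤ 1 + (gammaMax G i j : ℝ) :=
      le_add_of_nonneg_right (Nat.cast_nonneg _)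
    calc δ < (1 + (gammaMax G i j : ℝ))⁻¹ := hδ1
      _ ≤ 1 := by rw [inv_le_one_iff₀]; right; exact h1
  -- min degree is not 1
  have hmin : min (G.degree i) (G.degree j) ≠ 1 := by
    intro h
    rw [Ric, if_pos h] at hric
    linarith
  rw [Ric, if_neg hmin, min_eq_left hdeg, max_eq_right hdeg] at hric
  have hdi1 : 1 ≤ G.degree i := G.degree_pos_iff_exists_adj i |>.mpr ⟨j, hij⟩
  have hdi2 : 2 ≤ G.degree i := by
    rcases Nat.lt_or_ge (G.degree i) 2 with h | h
    · exfalso; apply hmin; rw [min_eq_left hdeg]; omega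
    · exact h
  set Δ : Finset V := nbr G i ∩ nbr G j with hΔ
  set Ω : Finset V := Δ ∪ {j} with hΩ
  set T : Finset V := (nbr G j \ nbr G i).erase i with hT
  have hTset : sharpSq G j i = T := by rw [sharpSq_eq hij.symm]
  have hQjc := card_sq hij.symm
  rw [hTset] at hQjc
  have hΔcomm : nbr G j ∩ nbr G i = Δ := Finset.inter_comm _ _
  rw [hΔcomm] at hQjc
  have htri : sharpTri G i j = Δ := by rw [sharpTri, hΔ]
  rw [htri] at hric
  -- real casts
  have hdi0 : (0:ℝ) < (G.degree i : ℝ) := by exact_mod_cast Nat.lt_of_lt_of_le Nat.zero_lt_two hdi2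
  have hdj0 : (0:ℝ) < (G.degree j : ℝ) := by
    exact_mod_cast Nat.lt_of_lt_of_le (Nat.lt_of_lt_of_le Nat.zero_lt_two hdi2) hdeg
  have hdij : (G.degree i : ℝ) ≤ (G.degree j : ℝ) := by exact_mod_cast hdeg
  -- case analysis
  by_cases hcase : 1 ≤ (sharpSq G i j).card ∧ 1 ≤ gammaMax G i j
  · -- contradiction case
    exfalso
    rw [if_neg (by omega)] at hric
    set g : ℝ := (gammaMax G i j : ℝ) with hg
    have hg1 : (1:ℝ) ≤ g := Nat.one_le_cast.mpr hcase.2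
    set Q : ℝ := ((sharpSq G i j).card : ℝ) with hQ
    set Q' : ℝ := ((sharpSq G j i).card : ℝ) with hQ'
    have hQ1 : (1:ℝ) ≤ Q := Nat.one_le_cast.mpr hcase.1
    have hQ'0 : (0:ℝ) ≤ Q' := Nat.cast_nonneg _
    have hΔ0 : (0:ℝ) ≤ (Δ.card : ℝ) := Nat.cast_nonneg _
    have hdjeq : Q' + 1 + (Δ.card:ℝ) = (G.degree j : ℝ) := by
      rw [hQ', hTset]; exact_mod_cast hQjc
    have hS : 2/(G.degree i:ℝ) + 2/(G.degree j:ℝ)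
        + 2 * ((Δ.card):ℝ)/(G.degree j:ℝ)
        + ((Δ.card):ℝ)/(G.degree i:ℝ)
        + g⁻¹/(G.degree j:ℝ) * (Q + Q') ≤ δ := by linarith
    set di : ℝ := (G.degree i : ℝ)
    set dj : ℝ := (G.degree j : ℝ)
    have e1 : (2:ℝ) ≤ 2/di * dj := by
      rw [div_mul_eq_mul_div, le_div_iff₀ hdi0]; linarith
    have e2 : (Δ.card:ℝ) ≤ (Δ.card:ℝ)/di * dj := by
      rw [div_mul_eq_mul_div, le_div_iff₀ hdi0]; nlinarith
    have e3 : (2:ℝ)/dj * dj = 2 := div_mul_cancel₀ 2 hdj0.ne'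
    have e4 : 2*(Δ.card:ℝ)/dj * dj = 2*(Δ.card:ℝ) := div_mul_cancel₀ _ hdj0.ne'
    have e5 : g⁻¹/dj*(Q+Q') * dj = g⁻¹*(Q+Q') := by field_simp
    have hA : 4 + 3*(Δ.card:ℝ) + g⁻¹*(Q+Q') ≤ δ * dj := by
      have := mul_le_mul_of_nonneg_right hS hdj0.le
      nlinarith
    have hg0 : (0:ℝ) < g := lt_of_lt_of_le one_pos hg1
    have hB : g⁻¹*(Q+Q') * g = Q+Q' := by field_simp
    have hδg : δ * (1+g) < 1 := by
      have h1g : (0:ℝ) < 1 + g := by linarith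
      have h2 := mul_lt_mul_of_pos_right hδ1 h1g
      rwa [inv_mul_cancel₀ h1g.ne'] at h2
    have hC : δ * dj * g < dj := by nlinarith
    nlinarith [mul_le_mul_of_nonneg_right hA hg0.le]
  · -- good case: every geodesic middle vertex is in Ω
    push_neg at hcase
    have hQγ : (sharpSq G i j).card = 0 ∨ gammaMax G i j = 0 := by
      by_cases h : 1 ≤ (sharpSq G i j).card
      · right; have := hcase h; omega
      · left; omega
    have hγsup : ∀ m ∈ sharpSq G i j, (nbr G m ∩ (nbr G j \ nbr G i)).card ≤ 1 := by
      intro m hm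
      rcases hQγ with h | h
      · exfalso
        rw [Finset.card_eq_zero.mp h] at hm
        exact Finset.notMem_empty m hm
      · have h1 : (nbr G m ∩ (nbr G j \ nbr G i)).card - 1 ≤ gammaMax G i j := by
          rw [gammaMax]
          exact le_trans
            (Finset.le_sup (f := fun k => (nbr G k ∩ (nbr G j \ nbr G i)).card - 1) hm)
            (le_max_left _ _)
        omega
    have key : ∀ t ∈ T, nbr G i ∩ nbr G t ⊆ Ω := by
      intro t ht m hm
      rw [hT, Finset.mem_erase, Finset.mem_sdiff] at ht
      obtain ⟨hti, htj, htni⟩ := ht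
      rw [Finset.mem_inter] at hm
      by_contra hmΩ
      rw [hΩ, Finset.mem_union, Finset.mem_singleton] at hmΩ
      push_neg at hmΩ
      obtain ⟨hmΔ, hmj⟩ := hmΩ
      have hmnj : m ∉ nbr G j := fun h => hmΔ (by rw [hΔ, Finset.mem_inter]; exact ⟨hm.1, h⟩)
      have hmSq : m ∈ sharpSq G i j := by
        rw [sharpSq, Finset.mem_filter, Finset.mem_erase, Finset.mem_sdiff]
        refine ⟨⟨hmj, hm.1, hmnj⟩, t, ?_⟩
        rw [Finset.mem_sdiff, Finset.mem_inter]
        exact ⟨⟨mem_nbr.mpr (mem_nbr.mp hm.2).symm, htj⟩, htni⟩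
      have hsub : ({i, t} : Finset V) ⊆ nbr G m ∩ (nbr G j \ nbr G i) := by
        intro x hx
        rw [Finset.mem_insert, Finset.mem_singleton] at hx
        rw [Finset.mem_inter, Finset.mem_sdiff]
        rcases hx with rfl | rfl
        · exact ⟨mem_nbr.mpr (mem_nbr.mp hm.1).symm, mem_nbr.mpr hij.symm, by simp [mem_nbr]⟩
        · exact ⟨mem_nbr.mpr (mem_nbr.mp hm.2).symm, htj, htni⟩
      have hc2 : 2 ≤ (nbr G m ∩ (nbr G j \ nbr G i)).card := by
        have hle := Finset.card_le_card hsub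
        rwa [Finset.card_pair (fun h => hti h.symm)] at hle
      exact absurd (hγsup m hmSq) (by omega)
    -- per t bound
    have per_t : ∀ t ∈ T, (1:ℝ) ≤ ∑ k ∈ Ω, (nGeoThrough G i t k : ℝ)/(nGeo G i t : ℝ) := by
      intro t ht
      have htmem := ht
      rw [hT, Finset.mem_erase, Finset.mem_sdiff] at htmem
      obtain ⟨hti, htj, htni⟩ := htmem
      have hd : G.dist i t = 2 :=
        dist_two hij (mem_nbr.mp htj) (fun h => htni (mem_nbr.mpr h)) (fun h => hti h.symm)
      set C : Finset V := nbr G i ∩ nbr G t with hC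
      have hjC : j ∈ C := by
        rw [hC, Finset.mem_inter]
        exact ⟨mem_nbr.mpr hij, mem_nbr.mpr (mem_nbr.mp htj).symm⟩
      have hCcard : 0 < C.card := Finset.card_pos.mpr ⟨j, hjC⟩
      have hgeo : nGeo G i t = C.card := nGeo_eq hd
      have hterm : ∀ k ∈ Ω, (if k ∈ C then (1:ℝ) else 0)/(C.card:ℝ) ≤
          (nGeoThrough G i t k : ℝ)/(nGeo G i t : ℝ) := by
        intro k _
        rw [hgeo]
        by_cases hk : k ∈ C
        · rw [if_pos hk]
          have h1 := nGeoThrough_pos hd hk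
          gcongr
          exact_mod_cast h1
        · rw [if_neg hk]
          rw [zero_div]
          positivity
      calc (1:ℝ) = ∑ k ∈ Ω, (if k ∈ C then (1:ℝ) else 0)/(C.card:ℝ) := by
            rw [← Finset.sum_div, Finset.sum_ite_mem, Finset.inter_eq_right.mpr (key t ht),
              Finset.sum_const, nsmul_eq_mul, mul_one,
              div_self (by exact_mod_cast hCcard.ne')]
        _ ≤ _ := Finset.sum_le_sum hterm
    -- betweenness lower bound
    have hbtw : ∀ k ∈ Ω, ∑ t ∈ T, (nGeoThrough G i t k:ℝ)/(nGeo G i t:ℝ) ≤ btw G k := by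
      intro k hk
      have hik : i ≠ k := by
        rw [hΩ, Finset.mem_union, Finset.mem_singleton] at hk
        rcases hk with hk | rfl
        · rw [hΔ, Finset.mem_inter] at hk
          intro h; exact G.irrefl (mem_nbr.mp (h ▸ hk.1))
        · exact hij.ne
      have htk : ∀ t ∈ T, t ≠ k := by
        intro t ht
        rw [hT, Finset.mem_erase, Finset.mem_sdiff] at ht
        rw [hΩ, Finset.mem_union, Finset.mem_singleton] at hk
        rcases hk with hk | rfl
        · rw [hΔ, Finset.mem_inter] at hk
          intro h; exact ht.2.2 (h ▸ hk.1)
        · intro h; exact G.irrefl (mem_nbr.mp (h ▸ ht.2.1))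
      simp only [_root_.btw]
      have hnn : ∀ s ∈ Finset.univ (α := V), 0 ≤ ∑ t, if s ≠ k ∧ t ≠ k then
          (nGeoThrough G s t k : ℝ) / (nGeo G s t : ℝ) else 0 := by
        intro s _
        apply Finset.sum_nonneg
        intro t _
        split
        · positivity
        · exact le_refl 0
      calc ∑ t ∈ T, (nGeoThrough G i t k:ℝ)/(nGeo G i t:ℝ)
          = ∑ t ∈ T, if i ≠ k ∧ t ≠ k then (nGeoThrough G i t k : ℝ) / (nGeo G i t : ℝ) else 0 := by
            refine Finset.sum_congr rfl fun t ht => ?_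
            rw [if_pos ⟨hik, htk t ht⟩]
        _ ≤ ∑ t, if i ≠ k ∧ t ≠ k then (nGeoThrough G i t k : ℝ) / (nGeo G i t : ℝ) else 0 := by
            refine Finset.sum_le_sum_of_subset_of_nonneg (Finset.subset_univ T) fun t _ _ => ?_
            split
            · positivity
            · exact le_refl 0
        _ ≤ _ := Finset.single_le_sum hnn (Finset.mem_univ i)
    have hsum : (T.card : ℝ) ≤ ∑ k ∈ Ω, btw G k := by
      calc (T.card : ℝ) = ∑ _t ∈ T, (1:ℝ) := by rw [Finset.sum_const, nsmul_eq_mul, mul_one]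
        _ ≤ ∑ t ∈ T, ∑ k ∈ Ω, (nGeoThrough G i t k : ℝ)/(nGeo G i t : ℝ) :=
            Finset.sum_le_sum per_t
        _ = ∑ k ∈ Ω, ∑ t ∈ T, (nGeoThrough G i t k : ℝ)/(nGeo G i t : ℝ) := Finset.sum_comm
        _ ≤ ∑ k ∈ Ω, btw G k := Finset.sum_le_sum hbtw
    -- arithmetic conclusion
    have hite : (0:ℝ) ≤ (if (sharpSq G i j).card = 0 then (0:ℝ)
        else ((gammaMax G i j : ℝ))⁻¹ / ((G.degree j : ℕ) : ℝ)
          * (((sharpSq G i j).card : ℝ) + ((sharpSq G j i).card : ℝ))) := by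
      split
      · exact le_refl 0
      · positivity
    have hδlb : 2/(G.degree i:ℝ) + 2/(G.degree j:ℝ) + 2*(Δ.card:ℝ)/(G.degree j:ℝ)
        + (Δ.card:ℝ)/(G.degree i:ℝ) ≤ δ := by linarith
    have hΔ0 : (0:ℝ) ≤ (Δ.card : ℝ) := Nat.cast_nonneg _
    have hTeq : (T.card:ℝ) + 1 + (Δ.card:ℝ) = (G.degree j : ℝ) := by exact_mod_cast hQjc
    have hA : 4 + 3*(Δ.card:ℝ) ≤ δ * (G.degree j:ℝ) := by
      have e1 : (2:ℝ) ≤ 2/(G.degree i:ℝ) * (G.degree j:ℝ) := by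
        rw [div_mul_eq_mul_div, le_div_iff₀ hdi0]; linarith
      have e2 : (Δ.card:ℝ) ≤ (Δ.card:ℝ)/(G.degree i:ℝ) * (G.degree j:ℝ) := by
        rw [div_mul_eq_mul_div, le_div_iff₀ hdi0]; nlinarith
      have e3 : (2:ℝ)/(G.degree j:ℝ) * (G.degree j:ℝ) = 2 := div_mul_cancel₀ 2 hdj0.ne'
      have e4 : 2*(Δ.card:ℝ)/(G.degree j:ℝ) * (G.degree j:ℝ) = 2*(Δ.card:ℝ) :=
        div_mul_cancel₀ _ hdj0.ne'
      have := mul_le_mul_of_nonneg_right hδlb hdj0.le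
      nlinarith
    have hkey : (Δ.card:ℝ) + 1 ≤ δ * (T.card:ℝ) := by nlinarith
    have hΩcard : (Ω.card : ℝ) = (Δ.card:ℝ) + 1 := by
      rw [hΩ, Finset.card_union_of_disjoint]
      · rw [Finset.card_singleton]; push_cast; ring
      · rw [Finset.disjoint_singleton_right, hΔ, Finset.mem_inter]
        intro h
        exact G.irrefl (mem_nbr.mp h.2)
    rw [hΩcard]
    have hΩpos : (0:ℝ) < (Δ.card:ℝ) + 1 := by linarith
    rw [one_div, inv_mul_eq_div, le_div_iff₀ hΩpos]
    calc δ⁻¹ * ((Δ.card:ℝ)+1) ≤ (T.card:ℝ) := by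
          rw [inv_mul_le_iff₀ hδ0]
          exact hkey
      _ ≤ _ := hsum
end

section
/- For any edge i∼j of a simple, undirected, locally finite graph with d_i ≤ d_j, the balanced Forman curvature dominates the Jost–Liu lower bound: Ric(i,j) ≥ Φ(i,j), where Φ(i,j) = −(1 − 1/d_i − 1/d_j − |♯Δ(i,j)|/d_j)_+ − (1 − 1/d_i − 1/d_j − |♯Δ(i,j)|/d_i)_+ + |♯Δ(i,j)|/d_j and (x)_+ = max{x, 0}. -/
open Finset

variable {V : Type*} [Fintype V] [DecidableEq V]

/-- **Balanced Forman curvature dominates the Jost–Liu bound.**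
For any edge `i∼j` with `d_i ≤ d_j`, `Ric(i,j) ≥ Φ(i,j)` where
`Φ(i,j) = −(1 − 1/d_i − 1/d_j − |♯Δ|/d_j)_+ − (1 − 1/d_i − 1/d_j − |♯Δ|/d_i)_+ + |♯Δ|/d_j`. -/
theorem balancedForman_ge_jostLiu (G : SimpleGraph V) [DecidableRel G.Adj] (i j : V)
    (hij : G.Adj i j) (hdeg : G.degree i ≤ G.degree j) :
    -(max (1 - 1 / (G.degree i : ℝ) - 1 / (G.degree j : ℝ)
          - ((sharpTri G i j).card : ℝ) / (G.degree j : ℝ)) 0)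
      - max (1 - 1 / (G.degree i : ℝ) - 1 / (G.degree j : ℝ)
          - ((sharpTri G i j).card : ℝ) / (G.degree i : ℝ)) 0
      + ((sharpTri G i j).card : ℝ) / (G.degree j : ℝ) ≤ Ric G i j := by
  have hjmem : j ∈ nbr G i := by simpa [nbr, SimpleGraph.mem_neighborFinset] using hij
  have hdi : 0 < G.degree i := Finset.card_pos.2 ⟨j, hjmem⟩
  have hdj : 0 < G.degree j := lt_of_lt_of_le hdi hdeg
  have hdiR : (0:ℝ) < (G.degree i : ℝ) := by exact_mod_cast hdi
  have hdjR : (0:ℝ) < (G.degree j : ℝ) := by exact_mod_cast hdj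
  by_cases h1 : G.degree i = 1
  · -- degree i = 1: Ric = 0 and LHS = 0
    have hTri : sharpTri G i j = ∅ := by
      have hcard : (nbr G i).card = 1 := h1
      obtain ⟨a, ha⟩ := Finset.card_eq_one.mp hcard
      have haj : a = j := (Finset.mem_singleton.mp (by rw [← ha]; exact hjmem)).symm
      subst haj
      ext k
      simp only [sharpTri, Finset.mem_inter, ha, Finset.mem_singleton, Finset.notMem_empty,
        iff_false, not_and]
      rintro rfl
      simp [nbr]
    have hmin : min (G.degree i) (G.degree j) = 1 := by
      rw [min_eq_left hdeg, h1]
    rw [Ric, if_pos hmin, hTri]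
    have h1R : (G.degree i : ℝ) = 1 := by exact_mod_cast h1
    have hneg : (1 : ℝ) - 1 / (G.degree i : ℝ) - 1 / (G.degree j : ℝ) - 0 ≤ 0 := by
      rw [h1R]
      have : 0 < 1 / (G.degree j : ℝ) := by positivity
      linarith
    simp only [Finset.card_empty, Nat.cast_zero, zero_div,
      max_eq_right hneg, max_eq_right (show (1:ℝ) - 1/(G.degree i:ℝ) - 1/(G.degree j:ℝ) - 0 ≤ 0 from hneg)]
    norm_num
  · -- degree i ≥ 2
    have hmin : min (G.degree i) (G.degree j) = G.degree i := min_eq_left hdeg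
    have hmax : max (G.degree i) (G.degree j) = G.degree j := max_eq_right hdeg
    have hminne : min (G.degree i) (G.degree j) ≠ 1 := by rw [hmin]; exact h1
    rw [Ric, if_neg hminne, hmin, hmax]
    set T : ℝ := ((sharpTri G i j).card : ℝ) with hT
    set NN : ℝ := (if (sharpSq G i j).card = 0 then 0
        else ((gammaMax G i j : ℝ))⁻¹ / (G.degree j : ℝ)
          * (((sharpSq G i j).card : ℝ) + ((sharpSq G j i).card : ℝ))) with hNN
    have hlast : (0:ℝ) ≤ NN := by
      rw [hNN]; split_ifs with h
      · exact le_rfl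
      · positivity
    have hm1 : (1:ℝ) - 1 / (G.degree i : ℝ) - 1 / (G.degree j : ℝ) - T / (G.degree j : ℝ)
        ≤ max (1 - 1 / (G.degree i : ℝ) - 1 / (G.degree j : ℝ) - T / (G.degree j : ℝ)) 0 :=
      le_max_left _ _
    have hm2 : (1:ℝ) - 1 / (G.degree i : ℝ) - 1 / (G.degree j : ℝ) - T / (G.degree i : ℝ)
        ≤ max (1 - 1 / (G.degree i : ℝ) - 1 / (G.degree j : ℝ) - T / (G.degree i : ℝ)) 0 :=
      le_max_left _ _
    clear_value T NN
    rw [show 2 * T / (G.degree j : ℝ) = T / (G.degree j : ℝ) + T / (G.degree j : ℝ) by ring,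
      show (2:ℝ) / (G.degree i : ℝ) = 1 / (G.degree i : ℝ) + 1 / (G.degree i : ℝ) by ring,
      show (2:ℝ) / (G.degree j : ℝ) = 1 / (G.degree j : ℝ) + 1 / (G.degree j : ℝ) by ring]
    linarith [hlast, hm1, hm2]
end
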